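/- arXiv:1906.04148 — 2 statements merged into one kernel-verified Lean document; each statement's English description precedes it below -/
import Mathlib

section
/- If q < 1/2 and p(0) < 1, then the level winning probabilities oscillate: for every 0 ≤ h ≤ N−1, if N−h is odd then p_h < p_{h+1}, and if N−h is even then p_h > p_{h+1}. Equivalently, p_{N−2m} > p_{N−2m+1} for all integers m with 1 ≤ 2m ≤ N, and p_{N−2m−1} < p_{N−2m} for all integers m with 0 ≤ 2m+1 ≤ N. -/
/-!
Write `F = G ∘ a` with `G s = ∑ sᵏ p(k)` the generating function of `p` and
`a x = q x + (1 - q)(1 - x)`. On `[0, 1]`, `G` is strictly increasing because `p` puts mass on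
some `k ≥ 1`, while `a` is strictly decreasing because `q < 1/2`; so `F` is a strictly decreasing
self-map of `[0, 1]` with `F 1 = G q < G 1 = 1`. Reading the levels from the top,
`p_{N-n} = Fⁿ(1)`, and a strictly decreasing map reverses the order of consecutive iterates at
every step.
-/

open Set

theorem StrictAntiOn.iterate_alternates {α : Type*} [Preorder α] {f : α → α} {s : Set α}
    (hf : StrictAntiOn f s) (hmaps : MapsTo f s s) {x : α} (hx : x ∈ s) (hfx : f x < x)
    (n : ℕ) : (Even n → f^[n + 1] x < f^[n] x) ∧ (Odd n → f^[n] x < f^[n + 1] x) := by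
  induction n with
  | zero => simpa using hfx
  | succ n ih =>
    have hmem (m : ℕ) : f^[m] x ∈ s := hmaps.iterate m hx
    rw [Nat.even_add_one, Nat.odd_add_one, Nat.not_even_iff_odd, Nat.not_odd_iff_even]
    refine ⟨fun hn => ?_, fun hn => ?_⟩
    · simpa only [← Function.iterate_succ_apply'] using hf (hmem n) (hmem _) (ih.2 hn)
    · simpa only [← Function.iterate_succ_apply'] using hf (hmem _) (hmem n) (ih.1 hn)

theorem eq_iterate_of_forall_lt_eq {α : Type*} {f : α → α} {P : ℕ → α} {N : ℕ}
    (hrec : ∀ h < N, P h = f (P (h + 1))) {h : ℕ} (hh : h ≤ N) : P h = f^[N - h] (P N) := by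
  induction hh using Nat.decreasingInduction with
  | self => simp
  | of_succ k hk ih =>
    rw [hrec k hk, ih, ← Function.iterate_succ_apply' f, Nat.succ_eq_add_one]
    congr 2
    omega

theorem mapsTo_affine_Icc {q : ℝ} (hq0 : 0 ≤ q) (hq1 : q ≤ 1) :
    MapsTo (fun x => q * x + (1 - q) * (1 - x)) (Icc 0 1) (Icc 0 1) := fun x hx =>
  ⟨by nlinarith [hx.1, hx.2], by nlinarith [hx.1, hx.2]⟩

theorem strictAnti_affine_of_lt_half {q : ℝ} (hq : q < 1 / 2) :
    StrictAnti fun x : ℝ => q * x + (1 - q) * (1 - x) := fun _ _ _ => by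
  nlinarith

noncomputable def pgf (p : ℕ → ℝ) (s : ℝ) : ℝ := ∑' k, s ^ k * p k

section pgf

variable {p : ℕ → ℝ}

theorem exists_ne_zero_pos_of_hasSum_one (hp : ∀ k, 0 ≤ p k) (hpsum : HasSum p 1)
    (hp0 : p 0 < 1) : ∃ k ≠ 0, 0 < p k := by
  by_contra! h
  have hsingle : HasSum p (p 0) :=
    hasSum_single 0 fun k hk => le_antisymm (h k hk) (hp k)
  exact hp0.ne (hsingle.unique hpsum)

theorem summable_pow_mul_of_mem_Icc (hp : ∀ k, 0 ≤ p k) (hps : Summable p) {s : ℝ}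
    (hs : s ∈ Icc (0 : ℝ) 1) : Summable fun k => s ^ k * p k :=
  hps.of_nonneg_of_le (fun k => mul_nonneg (pow_nonneg hs.1 k) (hp k))
    fun k => mul_le_of_le_one_left (hp k) (pow_le_one₀ hs.1 hs.2)

theorem monotoneOn_pgf (hp : ∀ k, 0 ≤ p k) (hps : Summable p) :
    MonotoneOn (pgf p) (Icc 0 1) := fun _ hs _ ht hst =>
  Summable.tsum_le_tsum
    (fun k => mul_le_mul_of_nonneg_right (pow_le_pow_left₀ hs.1 hst k) (hp k))
    (summable_pow_mul_of_mem_Icc hp hps hs) (summable_pow_mul_of_mem_Icc hp hps ht)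

theorem strictMonoOn_pgf (hp : ∀ k, 0 ≤ p k) (hps : Summable p) {k : ℕ} (hk : k ≠ 0)
    (hpk : 0 < p k) : StrictMonoOn (pgf p) (Icc 0 1) := fun _ hs _ ht hst =>
  Summable.tsum_lt_tsum (i := k)
    (fun j => mul_le_mul_of_nonneg_right (pow_le_pow_left₀ hs.1 hst.le j) (hp j))
    (mul_lt_mul_of_pos_right (pow_lt_pow_left₀ hst hs.1 hk) hpk)
    (summable_pow_mul_of_mem_Icc hp hps hs) (summable_pow_mul_of_mem_Icc hp hps ht)

theorem pgf_one (hpsum : HasSum p 1) : pgf p 1 = 1 := by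
  simpa [pgf] using hpsum.tsum_eq

theorem mapsTo_pgf_Icc (hp : ∀ k, 0 ≤ p k) (hpsum : HasSum p 1) :
    MapsTo (pgf p) (Icc 0 1) (Icc 0 1) := fun _ hs =>
  ⟨tsum_nonneg fun k => mul_nonneg (pow_nonneg hs.1 k) (hp k),
    pgf_one hpsum ▸ monotoneOn_pgf hp hpsum.summable hs (right_mem_Icc.2 zero_le_one) hs.2⟩

end pgf

theorem stmt_5_general (q : ℝ) (hq0 : 0 ≤ q)
    (p : ℕ → ℝ) (hp : ∀ k, 0 ≤ p k) (hpsum : HasSum p 1)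
    (F : ℝ → ℝ)
    (hF : ∀ x : ℝ, F x = ∑' k : ℕ, (q * x + (1 - q) * (1 - x)) ^ k * p k)
    (N : ℕ)
    (P : ℕ → ℝ) (hPN : P N = 1) (hPrec : ∀ h, h < N → P h = F (P (h + 1)))
    (hq : q < 1 / 2) (hp0 : p 0 < 1) :
    (∀ h, h < N →
      (Odd (N - h) → P h < P (h + 1)) ∧ (Even (N - h) → P h > P (h + 1))) ∧
    (∀ m : ℕ, 1 ≤ 2 * m → 2 * m ≤ N → P (N - 2 * m) > P (N - 2 * m + 1)) ∧
    (∀ m : ℕ, 2 * m + 1 ≤ N → P (N - (2 * m + 1)) < P (N - 2 * m)) := by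
  have hq1 : q ≤ 1 := by linarith
  obtain ⟨k, hk, hpk⟩ := exists_ne_zero_pos_of_hasSum_one hp hpsum hp0
  have hFeq : F = pgf p ∘ fun x => q * x + (1 - q) * (1 - x) := funext hF
  have hG := strictMonoOn_pgf hp hpsum.summable hk hpk
  have hanti : StrictAntiOn F (Icc 0 1) := hFeq ▸ hG.comp_strictAntiOn
    ((strictAnti_affine_of_lt_half hq).strictAntiOn _) (mapsTo_affine_Icc hq0 hq1)
  have hmaps : MapsTo F (Icc 0 1) (Icc 0 1) :=
    hFeq ▸ (mapsTo_pgf_Icc hp hpsum).comp (mapsTo_affine_Icc hq0 hq1)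
  have hF1 : F 1 < 1 := by
    have hGq := hG ⟨hq0, hq1⟩ (right_mem_Icc.2 zero_le_one) (by linarith)
    simpa [hFeq, pgf_one hpsum] using hGq
  have halt := hanti.iterate_alternates hmaps (right_mem_Icc.2 zero_le_one) hF1
  have key : ∀ h < N,
      (Odd (N - h) → P h < P (h + 1)) ∧ (Even (N - h) → P h > P (h + 1)) := by
    intro h hh
    obtain ⟨n, hn⟩ : ∃ n, N - h = n + 1 := ⟨N - h - 1, by omega⟩
    rw [eq_iterate_of_forall_lt_eq hPrec hh.le, eq_iterate_of_forall_lt_eq hPrec hh, hPN, hn,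
      show N - (h + 1) = n by omega, Nat.odd_add_one, Nat.even_add_one, Nat.not_odd_iff_even,
      Nat.not_even_iff_odd]
    exact halt n
  refine ⟨key, fun m hm1 hm2 => ?_, fun m hm => ?_⟩
  · have := (key (N - 2 * m) (by omega)).2
    rw [show N - (N - 2 * m) = 2 * m by omega] at this
    exact this (even_two_mul m)
  · have := (key (N - (2 * m + 1)) (by omega)).1
    rw [show N - (N - (2 * m + 1)) = 2 * m + 1 by omega,
      show N - (2 * m + 1) + 1 = N - 2 * m by omega] at this
    exact this (odd_two_mul_add_one m)

theorem stmt_5 (q : ℝ) (hq0 : 0 ≤ q) (hq1 : q ≤ 1)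
    (p : ℕ → ℝ) (hp : ∀ k, 0 ≤ p k) (hpsum : HasSum p 1)
    (F : ℝ → ℝ)
    (hF : ∀ x : ℝ, F x = ∑' k : ℕ, (q * x + (1 - q) * (1 - x)) ^ k * p k)
    (N : ℕ) (hN : 1 ≤ N)
    (P : ℕ → ℝ) (hPN : P N = 1) (hPrec : ∀ h, h < N → P h = F (P (h + 1)))
    (hq : q < 1 / 2) (hp0 : p 0 < 1) :
    (∀ h, h < N →
      (Odd (N - h) → P h < P (h + 1)) ∧ (Even (N - h) → P h > P (h + 1))) ∧
    (∀ m : ℕ, 1 ≤ 2 * m → 2 * m ≤ N → P (N - 2 * m) > P (N - 2 * m + 1)) ∧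
    (∀ m : ℕ, 2 * m + 1 ≤ N → P (N - (2 * m + 1)) < P (N - 2 * m)) :=
  stmt_5_general q hq0 p hp hpsum F hF N P hPN hPrec hq hp0
end

section
/- Suppose the bipolar argumentation framework ⟨A, R_sup, R_att⟩ is a reply tree, i.e. the union relation E := R_sup ∪ R_att is such that every element of A has at most one E-successor and the transitive closure of E is irreflexive. Then every pair (a,b) in the derived attack relation R lies in the transitive closure of E (b is a proper E-ancestor of a); consequently R is irreflexive and its transitive closure is irreflexive, i.e. the derived argumentation framework ⟨A, R⟩ is acyclic. -/
/-!
A derived attack is an `E`-path of positive length: a support path followed by one attack edge,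
or one attack edge followed by a support path. Hence a cycle of derived attacks would unfold
into an `E`-cycle.
-/

open Relation

def DerivedAttack {α : Type*} (Rsup Ratt : α → α → Prop) (a b : α) : Prop :=
  (∃ c, ReflTransGen Rsup a c ∧ Ratt c b) ∨ (∃ c, Ratt a c ∧ ReflTransGen Rsup c b)

theorem derivedAttack_le_transGen {α : Type*} {Rsup Ratt E : α → α → Prop} (hsup : Rsup ≤ E)
    (hatt : Ratt ≤ E) : DerivedAttack Rsup Ratt ≤ TransGen E := by
  rintro a b (⟨c, hac, hcb⟩ | ⟨c, hac, hcb⟩)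
  · exact .tail' (ReflTransGen.mono hsup _ _ hac) (hatt _ _ hcb)
  · exact .head' (hatt _ _ hac) (ReflTransGen.mono hsup _ _ hcb)

theorem not_transGen_derivedAttack_self {α : Type*} {Rsup Ratt E : α → α → Prop}
    (hsup : Rsup ≤ E) (hatt : Ratt ≤ E) (hE : ∀ a, ¬ TransGen E a a) (a : α) :
    ¬ TransGen (DerivedAttack Rsup Ratt) a a :=
  fun h => hE a (TransGen.closed (derivedAttack_le_transGen hsup hatt) _ _ h)

theorem stmt_13_general {α : Type*} (Rsup Ratt : α → α → Prop)
    (E : α → α → Prop) (hE : ∀ a b, E a b ↔ Rsup a b ∨ Ratt a b)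
    (R : α → α → Prop)
    (hR : ∀ a b, R a b ↔
      (∃ c, Relation.ReflTransGen Rsup a c ∧ Ratt c b) ∨
      (∃ c, Ratt a c ∧ Relation.ReflTransGen Rsup c b))
    (hacyclic : ∀ a, ¬ Relation.TransGen E a a) :
    (∀ a b, R a b → Relation.TransGen E a b) ∧
    (∀ a, ¬ R a a) ∧
    (∀ a, ¬ Relation.TransGen R a a) := by
  have hsup : Rsup ≤ E := fun a b h => (hE a b).2 (.inl h)
  have hatt : Ratt ≤ E := fun a b h => (hE a b).2 (.inr h)
  obtain rfl : R = DerivedAttack Rsup Ratt := funext₂ fun a b => propext (hR a b)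
  have hRacyclic := not_transGen_derivedAttack_self hsup hatt hacyclic
  exact ⟨derivedAttack_le_transGen hsup hatt, fun a h => hRacyclic a (.single h), hRacyclic⟩

theorem stmt_13 {α : Type*} (Rsup Ratt : α → α → Prop)
    (hdisj : ∀ a b, ¬(Rsup a b ∧ Ratt a b))
    (E : α → α → Prop) (hE : ∀ a b, E a b ↔ Rsup a b ∨ Ratt a b)
    (R : α → α → Prop)
    (hR : ∀ a b, R a b ↔
      (∃ c, Relation.ReflTransGen Rsup a c ∧ Ratt c b) ∨
      (∃ c, Ratt a c ∧ Relation.ReflTransGen Rsup c b))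
    (htree : ∀ a b c, E a b → E a c → b = c)
    (hacyclic : ∀ a, ¬ Relation.TransGen E a a) :
    (∀ a b, R a b → Relation.TransGen E a b) ∧
    (∀ a, ¬ R a a) ∧
    (∀ a, ¬ Relation.TransGen R a a) :=
  stmt_13_general Rsup Ratt E hE R hR hacyclic
end
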